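/- arXiv:2108.00140 — 3 statements merged into one kernel-verified Lean document; each statement's English description precedes it below -/
import Mathlib

section
/- Suppose the class 𝓛 of a complete duality pair (L,A) is closed under kernels of epimorphisms. Then a module is Gorenstein (L,A)-projective if and only if it is Gorenstein projective and satisfies Extⁱ_R(−, L) = 0 for all L ∈ 𝓛 and all i ≥ 1. -/
/-!
A complete duality pair contains all projectives. If `⋯ → P_{n+1} → P_n → P_{n-1} → ⋯` is an
exact complex of projectives and `M = ker d_n`, the truncation `⋯ → P_{n+2} → P_{n+1}` is a
projective resolution of `M`, so `Ext^{i}(M, L) = 0` for all `i ≥ 1` says exactly that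
`Hom(P, L)` is exact in all degrees `≥ n + 2`. This gives one implication. For the other, the
exactness of `Hom(P, L)` in the remaining degrees follows by descending induction: for `L ∈ 𝓛`
choose `0 → K → Q → L → 0` with `Q` projective, so that `K ∈ 𝓛` by closure under kernels of
epimorphisms; exactness at `b` for `L` follows from exactness at `b` for `Q`, which holds since
`P` is totally acyclic, and at `b + 1` for `K`.
-/

open CategoryTheory CategoryTheory.Limits DirectSum

namespace DualityPaper

variable {R : Type} [Ring R]

/-- The right `R`-module structure on the group of additive maps out of a left `R`-module,
given by `(f • r) m = f (r • m)`. -/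
instance charModuleRight (M A : Type) [AddCommGroup M] [AddCommGroup A] [Module R M] :
    Module Rᵐᵒᵖ (M →+ A) where
  smul r f := f.comp (DistribMulAction.toAddMonoidHom M r.unop)
  one_smul f := AddMonoidHom.ext fun m => by
    show f ((1 : Rᵐᵒᵖ).unop • m) = f m
    simp
  mul_smul r s f := AddMonoidHom.ext fun m => by
    show f ((r * s).unop • m) = f (s.unop • r.unop • m)
    rw [MulOpposite.unop_mul, mul_smul]
  smul_zero r := rfl
  smul_add r f g := rfl
  add_smul r s f := AddMonoidHom.ext fun m => by
    show f ((r + s).unop • m) = f (r.unop • m) + f (s.unop • m)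
    rw [MulOpposite.unop_add, add_smul, map_add]
  zero_smul f := AddMonoidHom.ext fun m => by
    show f ((0 : Rᵐᵒᵖ).unop • m) = 0
    simp

/-- The left `R`-module structure on the group of additive maps out of a right `R`-module. -/
instance charModuleLeft (N A : Type) [AddCommGroup N] [AddCommGroup A] [Module Rᵐᵒᵖ N] :
    Module R (N →+ A) where
  smul r f := f.comp (DistribMulAction.toAddMonoidHom N (MulOpposite.op r))
  one_smul f := AddMonoidHom.ext fun m => by
    show f ((MulOpposite.op (1 : R)) • m) = f m
    simp
  mul_smul r s f := AddMonoidHom.ext fun m => by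
    show f (MulOpposite.op (r * s) • m) = f (MulOpposite.op s • MulOpposite.op r • m)
    rw [MulOpposite.op_mul, mul_smul]
  smul_zero r := rfl
  smul_add r f g := rfl
  add_smul r s f := AddMonoidHom.ext fun m => by
    show f (MulOpposite.op (r + s) • m) = f (MulOpposite.op r • m) + f (MulOpposite.op s • m)
    rw [MulOpposite.op_add, add_smul, map_add]
  zero_smul f := AddMonoidHom.ext fun m => by
    show f (MulOpposite.op (0 : R) • m) = 0
    simp

/-- The character module `M⁺ = Hom_ℤ(M, ℚ/ℤ)` of a left module, as a right module. -/
def charL (M : ModuleCat.{0} R) : ModuleCat.{0} Rᵐᵒᵖ :=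
  ModuleCat.of Rᵐᵒᵖ (M →+ AddCircle (1 : ℚ))

/-- The character module `N⁺ = Hom_ℤ(N, ℚ/ℤ)` of a right module, as a left module. -/
def charR (N : ModuleCat.{0} Rᵐᵒᵖ) : ModuleCat.{0} R :=
  ModuleCat.of R (N →+ AddCircle (1 : ℚ))

/-- A left module over a (possibly noncommutative) ring is flat iff its character module is an
injective right module (Lambek); we take this as the definition of flatness. -/
def IsFlatMod (M : ModuleCat.{0} R) : Prop := CategoryTheory.Injective (charL M)

/-- `f`, `g` form a short exact sequence `0 → A → B → C → 0`. -/
def SES {A B C : ModuleCat.{0} R} (f : A ⟶ B) (g : B ⟶ C) : Prop :=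
  ∃ w : f ≫ g = 0, (ShortComplex.mk f g w).ShortExact

/-- Vanishing of `Ext^n_R(M, N)`. -/
def ExtVanish (n : ℕ) (M N : ModuleCat.{0} R) : Prop :=
  Subsingleton (((_root_.Ext ℤ (ModuleCat.{0} R) n).obj (Opposite.op M)).obj N)

/-- A complete duality pair `(𝓛, 𝓐)` over `R`. -/
structure CompleteDualityPair (𝓛 : Set (ModuleCat.{0} R)) (𝓐 : Set (ModuleCat.{0} Rᵐᵒᵖ)) :
    Prop where
  isoClosed_L : ∀ {M N : ModuleCat.{0} R}, (M ≅ N) → M ∈ 𝓛 → N ∈ 𝓛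
  isoClosed_A : ∀ {M N : ModuleCat.{0} Rᵐᵒᵖ}, (M ≅ N) → M ∈ 𝓐 → N ∈ 𝓐
  char_mem_iff : ∀ M : ModuleCat.{0} R, M ∈ 𝓛 ↔ charL M ∈ 𝓐
  char_mem_iff' : ∀ N : ModuleCat.{0} Rᵐᵒᵖ, N ∈ 𝓐 ↔ charR N ∈ 𝓛
  summands_A : ∀ A ∈ 𝓐, ∀ (B : ModuleCat.{0} Rᵐᵒᵖ) (i : B ⟶ A) (p : A ⟶ B),
    i ≫ p = 𝟙 B → B ∈ 𝓐
  sums_A : ∀ A B : ModuleCat.{0} Rᵐᵒᵖ, A ∈ 𝓐 → B ∈ 𝓐 → ModuleCat.of Rᵐᵒᵖ (A × B) ∈ 𝓐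
  summands_L : ∀ L ∈ 𝓛, ∀ (K : ModuleCat.{0} R) (i : K ⟶ L) (p : L ⟶ K),
    i ≫ p = 𝟙 K → K ∈ 𝓛
  sums_L : ∀ L K : ModuleCat.{0} R, L ∈ 𝓛 → K ∈ 𝓛 → ModuleCat.of R (L × K) ∈ 𝓛
  self_mem : ModuleCat.of R R ∈ 𝓛
  coprod_L : ∀ (ι : Type) (f : ι → ModuleCat.{0} R), (∀ i, f i ∈ 𝓛) →
    ModuleCat.of R (⨁ i, f i) ∈ 𝓛
  ext_L : ∀ {A B C : ModuleCat.{0} R} (f : A ⟶ B) (g : B ⟶ C),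
    SES f g → A ∈ 𝓛 → C ∈ 𝓛 → B ∈ 𝓛

/-- A doubly infinite exact sequence of projectives which stays exact after applying
`Hom_R(-, T)` for every `T` in the class `𝓣`. -/
structure IsTotallyAcyclicWrt (𝓣 : Set (ModuleCat.{0} R))
    (C : ChainComplex (ModuleCat.{0} R) ℤ) : Prop where
  projective : ∀ n, Projective (C.X n)
  exact : ∀ n, (C.sc n).Exact
  homExact : ∀ T ∈ 𝓣, ∀ (n : ℤ) (g : C.X n ⟶ T), C.d (n + 1) n ≫ g = 0 →
    ∃ h : C.X (n - 1) ⟶ T, C.d n (n - 1) ≫ h = g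

/-- `M` is Gorenstein projective relative to the class `𝓣`:  it is a kernel in a
`Hom_R(-, 𝓣)`-exact exact sequence of projective modules. -/
def IsGProj (𝓣 : Set (ModuleCat.{0} R)) (M : ModuleCat.{0} R) : Prop :=
  ∃ C : ChainComplex (ModuleCat.{0} R) ℤ, IsTotallyAcyclicWrt 𝓣 C ∧
    ∃ n : ℤ, Nonempty (M ≅ kernel (C.d n (n - 1)))

/-- `M` is strongly Gorenstein `(𝓛,𝓐)`-projective. -/
def IsSGProj (𝓣 : Set (ModuleCat.{0} R)) (M : ModuleCat.{0} R) : Prop :=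
  ∃ (P : ModuleCat.{0} R) (f : P ⟶ P), Projective P ∧
    (∃ w : f ≫ f = 0, (ShortComplex.mk f f w).Exact) ∧
    (∀ T ∈ 𝓣, ∀ g : P ⟶ T, f ≫ g = 0 → ∃ h : P ⟶ T, f ≫ h = g) ∧
    Nonempty (M ≅ kernel f)

/-- Resolution dimension of `M` with respect to a class `𝓒` is at most `n`. -/
def ResDimLE (𝓒 : Set (ModuleCat.{0} R)) : ℕ → ModuleCat.{0} R → Prop
  | 0, M => M ∈ 𝓒
  | n + 1, M => ∃ (K C : ModuleCat.{0} R) (f : K ⟶ C) (g : C ⟶ M),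
      C ∈ 𝓒 ∧ SES f g ∧ ResDimLE 𝓒 n K

/-- `K` is an `n`-th kernel of an exact sequence `0 → K → C_{n-1} → ⋯ → C₀ → M → 0`
with all `Cᵢ` in `𝓒`. -/
def IsNthSyzygy (𝓒 : Set (ModuleCat.{0} R)) : ℕ → ModuleCat.{0} R → ModuleCat.{0} R → Prop
  | 0, M, K => Nonempty (K ≅ M)
  | n + 1, M, K => ∃ (S C : ModuleCat.{0} R) (f : S ⟶ C) (g : C ⟶ M),
      C ∈ 𝓒 ∧ SES f g ∧ IsNthSyzygy 𝓒 n S K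

/-- A left Frobenius pair `(𝓧, ω)`. -/
structure LeftFrobeniusPair (𝓧 ω : Set (ModuleCat.{0} R)) : Prop where
  summands_X : ∀ X ∈ 𝓧, ∀ (Y : ModuleCat.{0} R) (i : Y ⟶ X) (p : X ⟶ Y),
    i ≫ p = 𝟙 Y → Y ∈ 𝓧
  extensions_X : ∀ {A B C : ModuleCat.{0} R} (f : A ⟶ B) (g : B ⟶ C),
    SES f g → A ∈ 𝓧 → C ∈ 𝓧 → B ∈ 𝓧
  kerEpi_X : ∀ {A B C : ModuleCat.{0} R} (f : A ⟶ B) (g : B ⟶ C),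
    SES f g → B ∈ 𝓧 → C ∈ 𝓧 → A ∈ 𝓧
  subset : ω ⊆ 𝓧
  inj : ∀ X ∈ 𝓧, ∀ W ∈ ω, ∀ i : ℕ, 1 ≤ i → ExtVanish i X W
  cogen : ∀ X ∈ 𝓧, ∃ (W X' : ModuleCat.{0} R) (f : X ⟶ W) (g : W ⟶ X'),
    W ∈ ω ∧ X' ∈ 𝓧 ∧ SES f g
  summands_ω : ∀ W ∈ ω, ∀ (V : ModuleCat.{0} R) (i : V ⟶ W) (p : W ⟶ V),
    i ≫ p = 𝟙 V → V ∈ ω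

section HomExact

variable {𝒞 : Type*} [Category 𝒞]

def HomExactAt [HasZeroMorphisms 𝒞] (D : ChainComplex 𝒞 ℤ) (L : 𝒞) (b : ℤ) : Prop :=
  ∀ g : D.X b ⟶ L, D.d (b + 1) b ≫ g = 0 → ∃ h : D.X (b - 1) ⟶ L, D.d b (b - 1) ≫ h = g

lemma homExactAt_iff' [HasZeroMorphisms 𝒞] {D : ChainComplex 𝒞 ℤ} {L : 𝒞} {a b c : ℤ}
    (ha : a = b + 1) (hc : c = b - 1) :
    HomExactAt D L b ↔ ∀ g : D.X b ⟶ L, D.d a b ≫ g = 0 → ∃ h : D.X c ⟶ L, D.d b c ≫ h = g := by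
  subst ha hc
  rfl

variable [Preadditive 𝒞]

/-- Lift `g : X_b → L` to `P`; on the image of `d_{b+1}` the lift lands in `kernel π`, and
subtracting an extension of that map (exactness for `kernel π` at `b + 1`) makes it vanish there,
so exactness for `P` at `b` applies. -/
lemma homExactAt_of_kernel {D : ChainComplex 𝒞 ℤ} {b : ℤ} [Projective (D.X b)]
    {P L : 𝒞} (π : P ⟶ L) [Epi π] [HasKernel π]
    (hP : HomExactAt D P b) (hK : HomExactAt D (kernel π) (b + 1)) : HomExactAt D L b := by
  intro g hg
  let g' : D.X b ⟶ P := Projective.factorThru g π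
  have hg'π : (D.d (b + 1) b ≫ g') ≫ π = 0 := by simp [g', hg]
  obtain ⟨v, hv⟩ := (homExactAt_iff' rfl (by ring)).1 hK (kernel.lift π _ hg'π)
    (by ext; simp)
  obtain ⟨h, hh⟩ := hP (g' - v ≫ kernel.ι π) (by simp [reassoc_of% hv, g'])
  exact ⟨h ≫ π, by simp [reassoc_of% hh, g']⟩

end HomExact

section Descent

variable {𝒞 : Type*} [Category 𝒞] [Preadditive 𝒞] [HasKernels 𝒞] [EnoughProjectives 𝒞]

lemma homExactAt_of_forall_ge {𝓛 : Set 𝒞} (h𝓛 : ∀ L ∈ 𝓛, kernel (Projective.π L) ∈ 𝓛)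
    {D : ChainComplex 𝒞 ℤ} (hD : ∀ b, Projective (D.X b))
    (hproj : ∀ P, Projective P → ∀ b, HomExactAt D P b) {m : ℤ}
    (hge : ∀ L ∈ 𝓛, ∀ b, m ≤ b → HomExactAt D L b) : ∀ L ∈ 𝓛, ∀ b, HomExactAt D L b := by
  suffices ∀ k : ℕ, ∀ L ∈ 𝓛, ∀ b, m ≤ b + k → HomExactAt D L b from
    fun L hL b => this (m - b).toNat L hL b (by omega)
  intro k
  induction k with
  | zero => simpa using hge
  | succ k ih =>
    intro L hL b hb
    have := hD b
    exact homExactAt_of_kernel (Projective.π L) (hproj _ inferInstance b)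
      (ih _ (h𝓛 L hL) (b + 1) (by push_cast at hb; omega))

end Descent

lemma shortExact_kernel {𝒞 : Type*} [Category 𝒞] [Abelian 𝒞] {P L : 𝒞} (π : P ⟶ L) [Epi π] :
    (ShortComplex.mk (kernel.ι π) π (kernel.condition π)).ShortExact where
  exact := ShortComplex.exact_of_f_is_kernel _ (kernelIsKernel π)

namespace CompleteDualityPair

variable {𝓛 : Set (ModuleCat.{0} R)} {𝓐 : Set (ModuleCat.{0} Rᵐᵒᵖ)}

/-- A projective module is a direct summand of the free module `⨁_{x ∈ P} R`. -/
lemma projective_mem (hdp : CompleteDualityPair 𝓛 𝓐) (P : ModuleCat.{0} R) [Projective P] :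
    P ∈ 𝓛 := by
  classical
  have : Module.Projective R P := (IsProjective.iff_projective P).2 inferInstance
  obtain ⟨s, hs⟩ := Module.projective_def.1 this
  let e := finsuppLEquivDirectSum R R P
  refine hdp.summands_L _ (hdp.coprod_L P (fun _ => ModuleCat.of R R) fun _ => hdp.self_mem) P
    (ModuleCat.ofHom (e.toLinearMap ∘ₗ s))
    (ModuleCat.ofHom (Finsupp.linearCombination R id ∘ₗ e.symm.toLinearMap)) ?_
  ext x
  simpa using hs x

lemma kernel_mem (hdp : CompleteDualityPair 𝓛 𝓐)
    (hker : ∀ {A B C : ModuleCat.{0} R} (f : A ⟶ B) (g : B ⟶ C),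
      SES f g → B ∈ 𝓛 → C ∈ 𝓛 → A ∈ 𝓛)
    {P L : ModuleCat.{0} R} [Projective P] (π : P ⟶ L) [Epi π] (hL : L ∈ 𝓛) : kernel π ∈ 𝓛 :=
  hker (kernel.ι π) π ⟨kernel.condition π, shortExact_kernel π⟩ (hdp.projective_mem P) hL

end CompleteDualityPair

section Tail

variable {𝒞 : Type*} [Category 𝒞] [Abelian 𝒞] (D : ChainComplex 𝒞 ℤ)

lemma exactAt_iff_sc' {i j k : ℤ} (hi : i = j + 1) (hk : k = j - 1) :
    D.ExactAt j ↔ (D.sc' i j k).Exact :=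
  D.exactAt_iff' i j k (by simp [hi]) (by simp [hk])

noncomputable def tailFrom (n : ℤ) : ChainComplex 𝒞 ℕ :=
  ChainComplex.of (fun j => D.X (n + j)) (fun j => D.d (n + (j + 1 : ℕ)) (n + j))
    fun _ => D.d_comp_d _ _ _

lemma tailFrom_d (n : ℤ) (j : ℕ) :
    (tailFrom D n).d (j + 1) j = D.d (n + (j + 1 : ℕ)) (n + j) :=
  ChainComplex.of_d (fun j : ℕ => D.X (n + j)) (fun j => D.d (n + (j + 1 : ℕ)) (n + j)) j

lemma tailFrom_exactAt_succ {n : ℤ} {j : ℕ} (h : D.ExactAt (n + (j + 1 : ℕ))) :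
    (tailFrom D n).ExactAt (j + 1) := by
  rw [exactAt_iff_sc' D (i := n + (j + 1 + 1 : ℕ)) (k := n + j) (by push_cast; ring)
    (by push_cast; ring)] at h
  rw [HomologicalComplex.exactAt_iff' _ (j + 1 + 1) (j + 1) j (by simp) (by simp)]
  dsimp only [HomologicalComplex.sc', HomologicalComplex.shortComplexFunctor'] at h ⊢
  simp only [tailFrom_d]
  exact h

lemma exactAt_linearYonedaObj_tailFrom_iff (L : 𝒞) (n : ℤ) (j : ℕ) :
    ((tailFrom D n).linearYonedaObj ℤ L).ExactAt (j + 1) ↔ HomExactAt D L (n + (j + 1 : ℕ)) := by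
  rw [HomologicalComplex.exactAt_iff' _ j (j + 1) (j + 1 + 1) (by simp) (by simp),
    ShortComplex.moduleCat_exact_iff,
    homExactAt_iff' (a := n + (j + 1 + 1 : ℕ)) (c := n + j) (by push_cast; ring)
      (by push_cast; ring)]
  simp only [HomologicalComplex.shortComplexFunctor'_obj_f,
    HomologicalComplex.shortComplexFunctor'_obj_g, ChainComplex.linearYonedaObj_d, tailFrom_d]
  rfl

variable (n : ℤ)

noncomputable def kernelAugmentation : (tailFrom D (n + 1)).X 0 ⟶ kernel (D.d n (n - 1)) :=
  kernel.lift _ (D.d (n + 1 + (0 : ℕ)) n) (D.d_comp_d _ _ _)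

lemma kernelAugmentation_ι : kernelAugmentation D n ≫ kernel.ι _ = D.d (n + 1 + (0 : ℕ)) n :=
  kernel.lift_ι _ _ _

lemma d_comp_kernelAugmentation : (tailFrom D (n + 1)).d 1 0 ≫ kernelAugmentation D n = 0 := by
  rw [← cancel_mono (kernel.ι _), Category.assoc, kernelAugmentation_ι, zero_comp, tailFrom_d]
  exact D.d_comp_d _ _ _

lemma epi_kernelAugmentation (h : D.ExactAt n) : Epi (kernelAugmentation D n) :=
  ((exactAt_iff_sc' D (i := n + 1 + (0 : ℕ)) (by push_cast; ring) rfl).1 h).epi_kernelLift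

lemma exact_kernelAugmentation (h : D.ExactAt (n + 1)) :
    (ShortComplex.mk _ _ (d_comp_kernelAugmentation D n)).Exact := by
  replace h := (exactAt_iff_sc' D (i := n + 1 + (1 : ℕ)) (j := n + 1 + (0 : ℕ)) (k := n)
    (by push_cast; ring) (by push_cast; ring)).1 (by simpa using h)
  let φ : ShortComplex.mk _ _ (d_comp_kernelAugmentation D n) ⟶
      D.sc' (n + 1 + (1 : ℕ)) (n + 1 + (0 : ℕ)) n :=
    ShortComplex.homMk (𝟙 _) (𝟙 _) (kernel.ι _)
      ((Category.id_comp _).trans ((tailFrom_d D (n + 1) 0).symm.trans (Category.comp_id _).symm))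
      ((Category.id_comp _).trans (kernelAugmentation_ι D n).symm)
  have : Epi φ.τ₁ := inferInstanceAs (Epi (𝟙 _))
  have : IsIso φ.τ₂ := inferInstanceAs (IsIso (𝟙 _))
  have : Mono φ.τ₃ := inferInstanceAs (Mono (kernel.ι (D.d n (n - 1))))
  exact (ShortComplex.exact_iff_of_epi_of_isIso_of_mono φ).2 h

variable {D} in
noncomputable def kernelResolution (hproj : ∀ b, Projective (D.X b)) (hexact : ∀ b, D.ExactAt b) :
    ProjectiveResolution (kernel (D.d n (n - 1))) where
  complex := tailFrom D (n + 1)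
  projective _ := hproj _
  π := (ChainComplex.toSingle₀Equiv _ _).symm ⟨_, d_comp_kernelAugmentation D n⟩
  quasiIso := ⟨fun
    | 0 => by
      rw [ChainComplex.quasiIsoAt₀_iff, ShortComplex.quasiIso_iff_of_zeros' _ rfl rfl rfl]
      refine (ShortComplex.exact_and_epi_g_iff_of_iso ?_).2
        ⟨exact_kernelAugmentation D n (hexact _), epi_kernelAugmentation D n (hexact n)⟩
      exact ShortComplex.isoMk (Iso.refl _) (Iso.refl _) (Iso.refl _)
        ((Category.id_comp _).trans (Category.comp_id _).symm)
        ((Category.id_comp _).trans ((ChainComplex.toSingle₀Equiv_symm_apply_f_zero _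
          (d_comp_kernelAugmentation D n)).symm.trans (Category.comp_id _).symm))
    | j + 1 => by
      rw [quasiIsoAt_iff_exactAt' _ _ (ChainComplex.exactAt_succ_single_obj _ _)]
      exact tailFrom_exactAt_succ D (hexact _)⟩

end Tail

lemma extVanish_iff_of_iso {M N : ModuleCat.{0} R} (e : M ≅ N) (k : ℕ) (L : ModuleCat.{0} R) :
    ExtVanish k M L ↔ ExtVanish k N L :=
  (((Ext ℤ _ k).mapIso e.op).app L).toLinearEquiv.toEquiv.subsingleton_congr.symm

lemma extVanish_kernel_iff {D : ChainComplex (ModuleCat.{0} R) ℤ} (hproj : ∀ b, Projective (D.X b))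
    (hexact : ∀ b, D.ExactAt b) (n : ℤ) (L : ModuleCat.{0} R) (j : ℕ) :
    ExtVanish (j + 1) (kernel (D.d n (n - 1))) L ↔ HomExactAt D L (n + 2 + j) := by
  rw [ExtVanish,
    ((kernelResolution n hproj hexact).isoExt (j + 1) L).toLinearEquiv.toEquiv.subsingleton_congr,
    ← ModuleCat.isZero_iff_subsingleton, ← HomologicalComplex.exactAt_iff_isZero_homology,
    show n + 2 + j = n + 1 + ((j + 1 : ℕ) : ℤ) by push_cast; ring]
  exact exactAt_linearYonedaObj_tailFrom_iff D L (n + 1) j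

/-- if 𝓛 is closed under kernels of epimorphisms, then
GP = (Gorenstein projectives) ∩ ⊥∞𝓛. -/
theorem stmt4
    (R : Type) [Ring R] (𝓛 : Set (ModuleCat.{0} R)) (𝓐 : Set (ModuleCat.{0} Rᵐᵒᵖ))
    (hdp : CompleteDualityPair 𝓛 𝓐)
    (hker : ∀ {A B C : ModuleCat.{0} R} (f : A ⟶ B) (g : B ⟶ C),
      SES f g → B ∈ 𝓛 → C ∈ 𝓛 → A ∈ 𝓛) :
    ∀ M : ModuleCat.{0} R,
      IsGProj 𝓛 M ↔
        (IsGProj {P : ModuleCat.{0} R | Projective P} M ∧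
          ∀ L ∈ 𝓛, ∀ i : ℕ, 1 ≤ i → ExtVanish i M L) := by
  intro M
  constructor
  · rintro ⟨C, hC, n, ⟨e⟩⟩
    refine ⟨⟨C, ⟨hC.projective, hC.exact, fun P (hP : Projective P) =>
      hC.homExact P (hdp.projective_mem P)⟩, n, ⟨e⟩⟩, ?_⟩
    rintro L hL (_ | j) hj
    · omega
    rw [extVanish_iff_of_iso e, extVanish_kernel_iff hC.projective hC.exact]
    exact hC.homExact L hL _
  · rintro ⟨⟨C, hC, n, ⟨e⟩⟩, hExt⟩
    have hge : ∀ L ∈ 𝓛, ∀ b, n + 2 ≤ b → HomExactAt C L b := by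
      intro L hL b hb
      obtain ⟨j, rfl⟩ := Int.le.dest hb
      rw [← extVanish_kernel_iff hC.projective hC.exact, ← extVanish_iff_of_iso e]
      exact hExt L hL _ (by omega)
    refine ⟨C, ⟨hC.projective, hC.exact, ?_⟩, n, ⟨e⟩⟩
    exact homExactAt_of_forall_ge (fun L hL => hdp.kernel_mem hker (Projective.π L) hL)
      hC.projective hC.homExact hge

end DualityPaper
end

section
/- A Gorenstein (L,A)-projective module of finite 𝓛-resolution dimension (i.e., admitting a finite resolution by modules in 𝓛) lies in 𝓛, and hence is projective. -/
open CategoryTheory CategoryTheory.Limits DirectSum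

/-!
Write `M` as the cycles `Z_n` of a totally acyclic complex `C`. Every map from a cycle object
of `C` to a module of `𝓛` extends to the ambient term of `C`, and dimension shifting along a
finite `𝓛`-resolution gives the same for every module `X` of finite `𝓛`-resolution dimension;
this is `Ext¹(Z_n, X) = 0`. So the first step `0 → K → L → M → 0` of the resolution of `M`
splits and `M`, a summand of `L`, lies in `𝓛`. Then the identity of `M ≅ Z_n` extends to
`C_n`, exhibiting `M` as a summand of a projective module.
-/

namespace CategoryTheory.ShortComplex.ShortExact

variable {𝒞 : Type*} [Category 𝒞] [Abelian 𝒞]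

/-- With `S` a projective presentation, `hext` says `Ext¹(S.X₃, T.X₁) = 0`. -/
lemma exists_lift_of_forall_extend {S T : ShortComplex 𝒞} (hS : S.ShortExact)
    (hT : T.ShortExact) [Projective S.X₂]
    (hext : ∀ φ : S.X₁ ⟶ T.X₁, ∃ h : S.X₂ ⟶ T.X₁, S.f ≫ h = φ) (ψ : S.X₃ ⟶ T.X₃) :
    ∃ δ : S.X₃ ⟶ T.X₂, δ ≫ T.g = ψ := by
  have := hS.epi_g
  have := hT.epi_g
  have := hT.mono_f
  obtain ⟨α, hα⟩ : ∃ α : S.X₂ ⟶ T.X₂, α ≫ T.g = S.g ≫ ψ :=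
    ⟨Projective.factorThru _ _, Projective.factorThru_comp _ _⟩
  have hαf : (S.f ≫ α) ≫ T.g = 0 := by rw [Category.assoc, hα, S.zero_assoc, zero_comp]
  obtain ⟨γ, hγ⟩ := hext (hT.exact.lift _ hαf)
  have hkill : S.f ≫ (α - γ ≫ T.f) = 0 := by
    rw [Preadditive.comp_sub, reassoc_of% hγ, hT.exact.lift_f, sub_self]
  refine ⟨hS.exact.desc _ hkill, ?_⟩
  rw [← cancel_epi S.g, hS.exact.g_desc_assoc, Preadditive.sub_comp, hα, Category.assoc,
    T.zero, comp_zero, sub_zero]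

end CategoryTheory.ShortComplex.ShortExact

namespace DualityPaper

section Cycles

variable {𝒞 : Type*} [Category 𝒞] [Abelian 𝒞] (C : ChainComplex 𝒞 ℤ)

lemma epi_toCycles {i j : ℤ} (hij : (ComplexShape.down ℤ).Rel i j) (hj : C.ExactAt j) :
    Epi (C.toCycles i j) := by
  obtain rfl := (ComplexShape.down ℤ).prev_eq' hij
  exact hj.epi_toCycles

@[simps]
noncomputable def cyclesShortComplex (i j : ℤ) : ShortComplex 𝒞 :=
  ShortComplex.mk (C.iCycles i) (C.toCycles i j) (by simp [← cancel_mono (C.iCycles j)])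

lemma shortExact_cyclesShortComplex {i j : ℤ} (hij : (ComplexShape.down ℤ).Rel i j)
    (hj : C.ExactAt j) : (cyclesShortComplex C i j).ShortExact := by
  have : Mono (cyclesShortComplex C i j).f := inferInstanceAs (Mono (C.iCycles i))
  have : Epi (cyclesShortComplex C i j).g := epi_toCycles C hij hj
  exact ⟨ShortComplex.exact_of_f_is_kernel _ (isKernelOfComp _ _
    (C.cyclesIsKernel i j ((ComplexShape.down ℤ).next_eq' hij)) _ (C.toCycles_i i j))⟩

noncomputable def cyclesIsoKernel (n : ℤ) : C.cycles n ≅ kernel (C.d n (n - 1)) :=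
  (C.cyclesIsKernel n (n - 1) ((ComplexShape.down ℤ).next_eq' (sub_add_cancel n 1))
    ).conePointUniqueUpToIso (limit.isLimit _)

/-- For an exact complex `C` of projectives this says that `Hom(C, X)` is exact. -/
def ExtendsFromCycles (X : 𝒞) : Prop :=
  ∀ (i : ℤ) (φ : C.cycles i ⟶ X), ∃ h : C.X i ⟶ X, C.iCycles i ≫ h = φ

variable {C}

lemma ExtendsFromCycles.exists_lift (hproj : ∀ n, Projective (C.X n))
    (hexact : ∀ n, C.ExactAt n) {T : ShortComplex 𝒞} (h₁ : ExtendsFromCycles C T.X₁)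
    (hT : T.ShortExact) {i : ℤ} (ψ : C.cycles i ⟶ T.X₃) : ∃ δ : C.cycles i ⟶ T.X₂, δ ≫ T.g = ψ :=
  have : Projective (cyclesShortComplex C (i + 1) i).X₂ := hproj (i + 1)
  (shortExact_cyclesShortComplex C rfl (hexact i)).exists_lift_of_forall_extend hT (h₁ (i + 1)) ψ

lemma ExtendsFromCycles.of_shortExact (hproj : ∀ n, Projective (C.X n))
    (hexact : ∀ n, C.ExactAt n) {T : ShortComplex 𝒞} (hT : T.ShortExact)
    (h₁ : ExtendsFromCycles C T.X₁) (h₂ : ExtendsFromCycles C T.X₂) :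
    ExtendsFromCycles C T.X₃ := by
  intro i φ
  obtain ⟨δ, hδ⟩ := h₁.exists_lift hproj hexact hT φ
  obtain ⟨h, hh⟩ := h₂ i δ
  exact ⟨h ≫ T.g, by rw [reassoc_of% hh, hδ]⟩

end Cycles

section TotallyAcyclic

variable {R : Type} [Ring R] {𝓣 : Set (ModuleCat.{0} R)} {C : ChainComplex (ModuleCat.{0} R) ℤ}

lemma IsTotallyAcyclicWrt.extendsFromCycles_of_mem (hC : IsTotallyAcyclicWrt 𝓣 C)
    {T : ModuleCat.{0} R} (hT : T ∈ 𝓣) : ExtendsFromCycles C T := by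
  intro i φ
  have key := hC.homExact T hT (i + 1) (C.toCycles (i + 1) i ≫ φ) (by simp)
  rw [add_sub_cancel_right] at key
  obtain ⟨h, hh⟩ := key
  have := epi_toCycles C rfl (hC.exact i)
  exact ⟨h, by rwa [← C.toCycles_i, Category.assoc, cancel_epi] at hh⟩

lemma IsTotallyAcyclicWrt.extendsFromCycles_of_resDimLE (hC : IsTotallyAcyclicWrt 𝓣 C) :
    ∀ {n : ℕ} {X : ModuleCat.{0} R}, ResDimLE 𝓣 n X → ExtendsFromCycles C X
  | 0, _, hX => hC.extendsFromCycles_of_mem hX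
  | _ + 1, _, ⟨_, _, _, _, hL, ⟨_, hfg⟩, hK⟩ =>
    ExtendsFromCycles.of_shortExact hC.projective hC.exact hfg
      (hC.extendsFromCycles_of_resDimLE hK) (hC.extendsFromCycles_of_mem hL)

end TotallyAcyclic

theorem stmt8
    (R : Type) [Ring R] (𝓛 : Set (ModuleCat.{0} R)) (𝓐 : Set (ModuleCat.{0} Rᵐᵒᵖ))
    (hdp : CompleteDualityPair 𝓛 𝓐) (M : ModuleCat.{0} R) (hM : IsGProj 𝓛 M)
    (hLd : ∃ n : ℕ, ResDimLE 𝓛 n M) :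
    M ∈ 𝓛 ∧ Projective M := by
  obtain ⟨C, hC, n, ⟨e⟩⟩ := hM
  let e' : M ≅ C.cycles n := e ≪≫ (cyclesIsoKernel C n).symm
  have hmem : M ∈ 𝓛 := by
    obtain ⟨_ | d, hd⟩ := hLd
    · exact hd
    obtain ⟨_, L, _, g, hL, ⟨_, hfg⟩, hK⟩ := hd
    obtain ⟨δ, hδ⟩ := (hC.extendsFromCycles_of_resDimLE hK).exists_lift hC.projective hC.exact
      hfg e'.inv
    exact hdp.summands_L L hL M (e'.hom ≫ δ) g (by simp [hδ])
  obtain ⟨r, hr⟩ := hC.extendsFromCycles_of_mem (hdp.isoClosed_L e' hmem) n (𝟙 _)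
  have := hC.projective n
  exact ⟨hmem, Projective.of_iso e'.symm (Retract.mk (C.iCycles n) r hr).projective⟩

end DualityPaper
end

section
/- If R has finite weak global dimension, then an R-module is Gorenstein (L,A)-projective if and only if it is projective. In particular, over a von Neumann regular ring every Gorenstein (L,A)-projective module is projective. -/
/-!
Let `C` be a `Hom(-, 𝓛)`-exact exact complex of projectives and write `Z j` for its cycles, so that
`0 → Z (j+1) → C_{j+2} → Z j → 0` is exact. Flatness is injectivity of the character module; in
particular projectives are flat, and a flat `F` lies in `𝓛` because `F⁺` is a summand of the
character module of a free module. Comparing a flat resolution of `Z j` with the sequence above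
(Schanuel) shows that if `Z j` has flat dimension `≤ m + 1` then `Z (j+1)` has flat dimension
`≤ m`. If `Z (j+1) ∈ 𝓛`, then `Hom(-, 𝓛)`-exactness splits the sequence, so `Z j` is projective,
hence again in `𝓛`. Induction on the flat dimension thus makes every `Z j` projective. Conversely,
a projective `P` is a kernel in the split exact complex `⋯ → P → P → P → ⋯` whose differentials
alternate between `𝟙` and `0`.
-/

open CategoryTheory CategoryTheory.Limits DirectSum

namespace DualityPaper

variable {R : Type} [Ring R]

section ShortExact

variable {S : Type} [Ring S] {A B C : ModuleCat.{0} S} {f : A ⟶ B} {g : B ⟶ C}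

lemma ses_iff (f : A ⟶ B) (g : B ⟶ C) :
    SES f g ↔ Function.Injective f ∧ Function.Exact f g ∧ Function.Surjective g := by
  constructor
  · rintro ⟨w, hS⟩
    exact ⟨hS.moduleCat_injective_f,
      (ShortComplex.ShortExact.moduleCat_exact_iff_function_exact _).mp hS.exact,
      hS.moduleCat_surjective_g⟩
  · rintro ⟨hf, hfg, hg⟩
    have w : f ≫ g = 0 := ModuleCat.hom_ext hfg.linearMap_comp_eq_zero
    exact ⟨w, ModuleCat.shortComplex_shortExact (ShortComplex.mk f g w) hfg hf hg⟩

lemma SES.injective_middle (h : SES f g) [Injective A] [Injective C] : Injective B := by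
  obtain ⟨_, hS⟩ := h
  exact Injective.of_iso hS.splittingOfInjective.isoBinaryBiproduct.symm inferInstance

lemma SES.injective_right (h : SES f g) [Injective A] [Injective B] : Injective C := by
  obtain ⟨_, hS⟩ := h
  exact Retract.injective ⟨hS.splittingOfInjective.s, g, hS.splittingOfInjective.s_g⟩

end ShortExact

section CharacterModule

instance (M : ModuleCat.{0} R) : FunLike (charL M) M (AddCircle (1 : ℚ)) :=
  inferInstanceAs (FunLike (M →+ AddCircle (1 : ℚ)) M _)

instance (M : ModuleCat.{0} R) : AddMonoidHomClass (charL M) M (AddCircle (1 : ℚ)) :=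
  inferInstanceAs (AddMonoidHomClass (M →+ AddCircle (1 : ℚ)) M _)

instance (N : ModuleCat.{0} Rᵐᵒᵖ) : FunLike (charR N) N (AddCircle (1 : ℚ)) :=
  inferInstanceAs (FunLike (N →+ AddCircle (1 : ℚ)) N _)

instance (N : ModuleCat.{0} Rᵐᵒᵖ) : AddMonoidHomClass (charR N) N (AddCircle (1 : ℚ)) :=
  inferInstanceAs (AddMonoidHomClass (N →+ AddCircle (1 : ℚ)) N _)

@[ext] lemma charL_ext {M : ModuleCat.{0} R} {φ ψ : charL M} (h : ∀ m, φ m = ψ m) : φ = ψ :=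
  AddMonoidHom.ext h

@[ext] lemma charR_ext {N : ModuleCat.{0} Rᵐᵒᵖ} {φ ψ : charR N} (h : ∀ n, φ n = ψ n) : φ = ψ :=
  AddMonoidHom.ext h

def charLMap {M N : ModuleCat.{0} R} (f : M ⟶ N) : charL N ⟶ charL M :=
  ModuleCat.ofHom
    { toFun := fun φ => (φ : N →+ AddCircle (1 : ℚ)).comp f.hom.toAddMonoidHom
      map_add' := fun _ _ => rfl
      map_smul' := fun r φ => AddMonoidHom.ext fun m =>
        congrArg φ (f.hom.map_smul r.unop m).symm }

@[simp] lemma charLMap_apply {M N : ModuleCat.{0} R} (f : M ⟶ N) (φ : charL N) (m : M) :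
    charLMap f φ m = φ (f m) := rfl

lemma charLMap_injective {M N : ModuleCat.{0} R} {f : M ⟶ N} (hf : Function.Surjective f) :
    Function.Injective (charLMap f) := fun φ ψ h => charL_ext fun n => by
  obtain ⟨m, rfl⟩ := hf n
  exact congrArg (fun χ : charL M => χ m) h

lemma charLMap_surjective {M N : ModuleCat.{0} R} {f : M ⟶ N} (hf : Function.Injective f) :
    Function.Surjective (charLMap f) :=
  CharacterModule.dual_surjective_of_injective f.hom.toAddMonoidHom.toIntLinearMap hf

def charRMap {X Y : ModuleCat.{0} Rᵐᵒᵖ} (i : X ⟶ Y) : charR Y ⟶ charR X :=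
  ModuleCat.ofHom
    { toFun := fun φ => (φ : Y →+ AddCircle (1 : ℚ)).comp i.hom.toAddMonoidHom
      map_add' := fun _ _ => rfl
      map_smul' := fun r φ => AddMonoidHom.ext fun x =>
        congrArg φ (i.hom.map_smul (MulOpposite.op r) x).symm }

lemma charRMap_surjective {X Y : ModuleCat.{0} Rᵐᵒᵖ} {i : X ⟶ Y} (hi : Function.Injective i) :
    Function.Surjective (charRMap i) :=
  CharacterModule.dual_surjective_of_injective i.hom.toAddMonoidHom.toIntLinearMap hi

lemma charLMap_exact {A B C : ModuleCat.{0} R} {f : A ⟶ B} {g : B ⟶ C}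
    (hfg : Function.Exact f g) (hg : Function.Surjective g) :
    Function.Exact (charLMap g) (charLMap f) := by
  intro φ
  constructor
  · intro hφ
    have hker : g.hom.toAddMonoidHom.ker ≤ (φ : B →+ AddCircle (1 : ℚ)).ker := by
      intro b hb
      obtain ⟨a, rfl⟩ := (hfg b).mp hb
      exact congrArg (fun χ : charL A => χ a) hφ
    let lift := g.hom.toAddMonoidHom.liftOfSurjective (G₃ := AddCircle (1 : ℚ)) hg
    exact ⟨lift ⟨φ, hker⟩, congrArg Subtype.val (lift.symm_apply_apply ⟨φ, hker⟩)⟩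
  · rintro ⟨ψ, rfl⟩
    refine charL_ext fun a => ?_
    simp only [charLMap_apply, hfg.apply_apply_eq_zero, map_zero]
    rfl

lemma SES.charLMap {A B C : ModuleCat.{0} R} {f : A ⟶ B} {g : B ⟶ C} (h : SES f g) :
    SES (charLMap g) (charLMap f) := by
  obtain ⟨hf, hfg, hg⟩ := (ses_iff f g).mp h
  exact (ses_iff _ _).mpr ⟨charLMap_injective hg, charLMap_exact hfg hg, charLMap_surjective hf⟩

end CharacterModule

section Flat

def flipToCharR {X : ModuleCat.{0} Rᵐᵒᵖ} {P : ModuleCat.{0} R} (u : X ⟶ charL P) :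
    P ⟶ charR X :=
  ModuleCat.ofHom
    { toFun := fun p => AddMonoidHom.mk' (fun x => u x p) fun x y => by rw [map_add]; rfl
      map_add' := fun p q => charR_ext fun x => map_add (u x) p q
      map_smul' := fun r p => charR_ext fun x => by
        show u x (r • p) = u (MulOpposite.op r • x) p
        rw [u.hom.map_smul]
        rfl }

def flipToCharL {Y : ModuleCat.{0} Rᵐᵒᵖ} {P : ModuleCat.{0} R} (v : P ⟶ charR Y) :
    Y ⟶ charL P :=
  ModuleCat.ofHom
    { toFun := fun y => AddMonoidHom.mk' (fun p => v p y) fun p q => by rw [map_add]; rfl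
      map_add' := fun y y' => charL_ext fun p => map_add (v p) y y'
      map_smul' := fun r y => charL_ext fun p => by
        show v p (r • y) = v (r.unop • p) y
        rw [v.hom.map_smul]
        rfl }

/-- Adjointness `Hom(X, P⁺) ≃ Hom(P, X⁺)` turns the extension problem for `P⁺` along `X ↪ Y`
into the lifting problem for `P` along the surjection `Y⁺ ↠ X⁺`. -/
lemma IsFlatMod.of_projective (P : ModuleCat.{0} R) [Projective P] : IsFlatMod P where
  factors {X Y} u i hi := by
    have : Epi (charRMap i) := (ModuleCat.epi_iff_surjective _).mpr <|
      charRMap_surjective ((ModuleCat.mono_iff_injective i).mp hi)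
    refine ⟨flipToCharL (Projective.factorThru (flipToCharR u) (charRMap i)), ?_⟩
    ext x p
    exact congrArg (fun χ : charR X => χ x)
      (ConcreteCategory.congr_hom (Projective.factorThru_comp (flipToCharR u) (charRMap i)) p)

lemma IsFlatMod.prod {M N : ModuleCat.{0} R} (hM : IsFlatMod M) (hN : IsFlatMod N) :
    IsFlatMod (ModuleCat.of R (M × N)) := by
  have : Injective (charL M) := hM
  have : Injective (charL N) := hN
  have hses :
      SES (ModuleCat.ofHom (LinearMap.inl R M N)) (ModuleCat.ofHom (LinearMap.snd R M N)) :=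
    (ses_iff _ _).mpr ⟨LinearMap.inl_injective, Function.Exact.inl_snd, LinearMap.snd_surjective⟩
  exact hses.charLMap.injective_middle

lemma IsFlatMod.of_ses {A B C : ModuleCat.{0} R} {f : A ⟶ B} {g : B ⟶ C} (h : SES f g)
    (hB : IsFlatMod B) (hC : IsFlatMod C) : IsFlatMod A := by
  have : Injective (charL B) := hB
  have : Injective (charL C) := hC
  exact h.charLMap.injective_right

open scoped Classical in
noncomputable def freeCover (M : ModuleCat.{0} R) : ModuleCat.of R (⨁ _ : M, R) ⟶ M :=
  ModuleCat.ofHom (DirectSum.toModule R M M fun m => LinearMap.toSpanSingleton R M m)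

lemma freeCover_surjective (M : ModuleCat.{0} R) : Function.Surjective (freeCover M) := by
  classical
  intro m
  refine ⟨DirectSum.lof R M (fun _ => R) m 1, ?_⟩
  simp [freeCover]

lemma CompleteDualityPair.mem_of_isFlatMod {𝓛 : Set (ModuleCat.{0} R)}
    {𝓐 : Set (ModuleCat.{0} Rᵐᵒᵖ)} (hdp : CompleteDualityPair 𝓛 𝓐) {M : ModuleCat.{0} R}
    (hM : IsFlatMod M) : M ∈ 𝓛 := by
  have : Injective (charL M) := hM
  have : Mono (charLMap (freeCover M)) :=
    (ModuleCat.mono_iff_injective _).mpr (charLMap_injective (freeCover_surjective M))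
  have hfree : ModuleCat.of R (⨁ _ : M, R) ∈ 𝓛 :=
    hdp.coprod_L M (fun _ => ModuleCat.of R R) fun _ => hdp.self_mem
  refine (hdp.char_mem_iff M).mpr <| hdp.summands_A _ ((hdp.char_mem_iff _).mp hfree) _
    (charLMap (freeCover M)) (Injective.factorThru (𝟙 _) (charLMap (freeCover M))) ?_
  exact Injective.comp_factorThru _ _

end Flat

section ResolutionDimension

lemma ResDimLE.prod {S X : ModuleCat.{0} R} (hX : IsFlatMod X) :
    ∀ {m : ℕ}, ResDimLE {F : ModuleCat.{0} R | IsFlatMod F} m S →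
      ResDimLE {F : ModuleCat.{0} R | IsFlatMod F} m (ModuleCat.of R (S × X))
  | 0, hS => IsFlatMod.prod hS hX
  | _ + 1, ⟨K, C, f, g, hC, hfg, hK⟩ => by
    obtain ⟨hf, hexact, hg⟩ := (ses_iff f g).mp hfg
    refine ⟨K, ModuleCat.of R (C × X), ModuleCat.ofHom (LinearMap.inl R C X ∘ₗ f.hom),
      ModuleCat.ofHom (g.hom.prodMap LinearMap.id), IsFlatMod.prod hC hX, (ses_iff _ _).mpr
        ⟨fun a b hab => hf (congrArg Prod.fst hab), fun ⟨c, x⟩ => ?_, fun ⟨s, x⟩ => ?_⟩, hK⟩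
    · show (g c, x) = 0 ↔ ∃ a, (f a, (0 : X)) = (c, x)
      rw [Prod.mk_eq_zero, hexact c]
      constructor
      · rintro ⟨⟨a, rfl⟩, rfl⟩
        exact ⟨a, rfl⟩
      · rintro ⟨a, h⟩
        exact ⟨⟨a, congrArg Prod.fst h⟩, (congrArg Prod.snd h).symm⟩
    · obtain ⟨c, rfl⟩ := hg s
      exact ⟨(c, x), rfl⟩

/-- The pullback `E = A ×_B G` of `A ↪ B` along a surjection `G ↠ B`. -/
lemma exists_ses_pullback {A B C B₁ G : ModuleCat.{0} R} {f : A ⟶ B} {g : B ⟶ C}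
    {k : B₁ ⟶ G} {q : G ⟶ B} (hfg : SES f g) (hkq : SES k q) :
    ∃ (E : ModuleCat.{0} R) (i₁ : B₁ ⟶ E) (p₁ : E ⟶ A) (i₂ : E ⟶ G),
      SES i₁ p₁ ∧ SES i₂ (q ≫ g) := by
  obtain ⟨hf, hfg, hg⟩ := (ses_iff f g).mp hfg
  obtain ⟨hk, hkq, hq⟩ := (ses_iff k q).mp hkq
  let E := LinearMap.ker (f.hom ∘ₗ LinearMap.fst R A G - q.hom ∘ₗ LinearMap.snd R A G)
  have hE : ∀ e : E, f e.1.1 = q e.1.2 := fun e => sub_eq_zero.mp e.2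
  have mk_mem : ∀ {a c}, f a = q c → (a, c) ∈ E := fun h => sub_eq_zero.mpr h
  refine ⟨ModuleCat.of R E,
    ModuleCat.ofHom <| (LinearMap.inr R A G ∘ₗ k.hom).codRestrict E fun b => by
      simp [E, hkq.apply_apply_eq_zero],
    ModuleCat.ofHom (LinearMap.fst R A G ∘ₗ E.subtype),
    ModuleCat.ofHom (LinearMap.snd R A G ∘ₗ E.subtype), (ses_iff _ _).mpr
      ⟨fun b b' h => hk (congrArg (fun e : E => e.1.2) h), fun e => ⟨fun he => ?_, ?_⟩,
        fun a => ?_⟩,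
    (ses_iff _ _).mpr ⟨fun e e' h => ?_, fun c => ⟨fun hc => ?_, ?_⟩, hg.comp hq⟩⟩
  · have he' : e.1.1 = 0 := he
    obtain ⟨b, hb⟩ := (hkq e.1.2).mp (by rw [← hE, he', map_zero])
    exact ⟨b, Subtype.ext (Prod.ext he'.symm hb)⟩
  · rintro ⟨b, rfl⟩
    rfl
  · obtain ⟨c, hc⟩ := hq (f a)
    exact ⟨⟨(a, c), mk_mem hc.symm⟩, rfl⟩
  · have h' : e.1.2 = e'.1.2 := h
    exact Subtype.ext (Prod.ext (hf (by rw [hE, hE, h'])) h')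
  · obtain ⟨a, ha⟩ := (hfg (q c)).mp hc
    exact ⟨⟨(a, c), mk_mem ha⟩, rfl⟩
  · rintro ⟨e, rfl⟩
    show g (q e.1.2) = 0
    rw [← hE, hfg.apply_apply_eq_zero]

lemma ResDimLE.of_ses_of_isFlatMod {A B C : ModuleCat.{0} R} {f : A ⟶ B} {g : B ⟶ C}
    (hfg : SES f g) (hC : IsFlatMod C) :
    ∀ {m : ℕ}, ResDimLE {F : ModuleCat.{0} R | IsFlatMod F} m B →
      ResDimLE {F : ModuleCat.{0} R | IsFlatMod F} m A
  | 0, hB => IsFlatMod.of_ses hfg hB hC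
  | _ + 1, ⟨B₁, G, _, _, hG, hkq, hB₁⟩ => by
    obtain ⟨E, i₁, p₁, i₂, hE, hEG⟩ := exists_ses_pullback hfg hkq
    exact ⟨B₁, E, i₁, p₁, IsFlatMod.of_ses hEG hG hC, hE, hB₁⟩

/-- Schanuel's comparison of `0 → K' → P → K → 0` with `0 → S → F → K → 0`, given a lift
`φ : P ⟶ F` of `π` and its restriction `α : K' ⟶ S`. -/
lemma ses_prod_of_lift {K' P K S F : ModuleCat.{0} R} {ι : K' ⟶ P} {π : P ⟶ K} {i : S ⟶ F}
    {p : F ⟶ K} (hιπ : SES ι π) (hip : SES i p) {φ : P ⟶ F} (hφ : φ ≫ p = π) {α : K' ⟶ S}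
    (hα : α ≫ i = ι ≫ φ) :
    SES (ModuleCat.ofHom (α.hom.prod ι.hom) : K' ⟶ ModuleCat.of R (S × P))
      (ModuleCat.ofHom (i.hom.coprod (-φ.hom))) := by
  obtain ⟨hι, hιπ, hπ⟩ := (ses_iff ι π).mp hιπ
  obtain ⟨hi, hip, -⟩ := (ses_iff i p).mp hip
  have hφ : ∀ y, p (φ y) = π y := ConcreteCategory.congr_hom hφ
  have hα : ∀ k, i (α k) = φ (ι k) := ConcreteCategory.congr_hom hα
  refine (ses_iff _ _).mpr ⟨fun k k' h => hι (congrArg Prod.snd h), fun ⟨s, y⟩ => ?_,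
    fun z => ?_⟩
  · show i s + -φ y = 0 ↔ ∃ k, (α k, ι k) = (s, y)
    rw [← sub_eq_add_neg, sub_eq_zero]
    constructor
    · intro h
      obtain ⟨k, rfl⟩ := (hιπ y).mp (by rw [← hφ, ← h, hip.apply_apply_eq_zero])
      exact ⟨k, Prod.ext (hi (by rw [hα, h])) rfl⟩
    · rintro ⟨k, hk⟩
      obtain ⟨rfl, rfl⟩ := Prod.mk.inj hk
      exact hα k
  · obtain ⟨y, hy⟩ := hπ (p z)
    obtain ⟨s, hs⟩ := (hip (z - φ y)).mp (by rw [map_sub, hφ, hy, sub_self])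
    exact ⟨(s, -y), by simp [hs]⟩

lemma ResDimLE.of_ses_of_projective {K' P K : ModuleCat.{0} R} {ι : K' ⟶ P} {π : P ⟶ K}
    (hιπ : SES ι π) [Projective P] {m : ℕ}
    (hK : ResDimLE {F : ModuleCat.{0} R | IsFlatMod F} (m + 1) K) :
    ResDimLE {F : ModuleCat.{0} R | IsFlatMod F} m K' := by
  obtain ⟨S, F, i, p, hF, ⟨w, hip⟩, hS⟩ := hK
  have : Epi p := hip.epi_g
  have : Mono i := hip.mono_f
  let φ : P ⟶ F := Projective.factorThru π p
  have hιφ : (ι ≫ φ) ≫ p = 0 := by simp [φ, hιπ.1]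
  have hcone := ses_prod_of_lift hιπ ⟨w, hip⟩ (Projective.factorThru_comp π p)
    (hip.exact.lift_f (ι ≫ φ) hιφ)
  exact ResDimLE.of_ses_of_isFlatMod hcone hF (ResDimLE.prod (IsFlatMod.of_projective P) hS)

end ResolutionDimension

section TotallyAcyclic

variable {𝓣 : Set (ModuleCat.{0} R)} (C : ChainComplex (ModuleCat.{0} R) ℤ)

/-- The cycles in degree `j + 1`; the offset lets `ses_cyclesMod` be stated without index casts. -/
def cyclesMod (j : ℤ) : ModuleCat.{0} R := ModuleCat.of R (LinearMap.ker (C.d (j + 1) j).hom)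

def cyclesModι (j : ℤ) : cyclesMod C j ⟶ C.X (j + 1) :=
  ModuleCat.ofHom (LinearMap.ker (C.d (j + 1) j).hom).subtype

def toCyclesMod (j : ℤ) : C.X (j + 1 + 1) ⟶ cyclesMod C j :=
  ModuleCat.ofHom <| (C.d (j + 1 + 1) (j + 1)).hom.codRestrict _ fun x => by
    show C.d (j + 1) j (C.d (j + 1 + 1) (j + 1) x) = 0
    rw [← ConcreteCategory.comp_apply, C.d_comp_d]
    rfl

lemma toCyclesMod_cyclesModι (j : ℤ) :
    toCyclesMod C j ≫ cyclesModι C j = C.d (j + 1 + 1) (j + 1) := rfl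

instance (j : ℤ) : Mono (cyclesModι C j) :=
  (ModuleCat.mono_iff_injective _).mpr Subtype.val_injective

variable {C}

lemma ses_cyclesMod (hC : ∀ n, (C.sc n).Exact) (j : ℤ) :
    SES (cyclesModι C (j + 1)) (toCyclesMod C j) := by
  have hexact : Function.Exact (C.d (j + 1 + 1) (j + 1)) (C.d (j + 1) j) :=
    (ShortComplex.ShortExact.moduleCat_exact_iff_function_exact _).mp
      ((C.exactAt_iff' (j + 1 + 1) (j + 1) j (by simp) (by simp)).mp (hC (j + 1)))
  refine (ses_iff _ _).mpr ⟨Subtype.val_injective, fun x => ?_, fun ⟨z, hz⟩ => ?_⟩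
  · show (⟨_, _⟩ : LinearMap.ker _) = 0 ↔ x ∈ Set.range Subtype.val
    rw [Subtype.range_val, Subtype.ext_iff]
    rfl
  · obtain ⟨y, hy⟩ := (hexact z).mp hz
    exact ⟨y, Subtype.ext hy⟩

lemma IsTotallyAcyclicWrt.exists_retraction (hC : IsTotallyAcyclicWrt 𝓣 C) {j : ℤ}
    (hZ : cyclesMod C j ∈ 𝓣) : ∃ r : C.X (j + 1) ⟶ cyclesMod C j, cyclesModι C j ≫ r = 𝟙 _ := by
  have : Epi (toCyclesMod C j) := (ses_cyclesMod hC.exact j).2.epi_g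
  have hd : C.d (j + 1 + 1 + 1) (j + 1 + 1) ≫ toCyclesMod C j = 0 := by
    rw [← cancel_mono (cyclesModι C j), Category.assoc, toCyclesMod_cyclesModι, C.d_comp_d,
      zero_comp]
  have := hC.homExact _ hZ (j + 1 + 1) (toCyclesMod C j) hd
  rw [add_sub_cancel_right] at this
  obtain ⟨r, hr⟩ := this
  refine ⟨r, ?_⟩
  rw [← cancel_epi (toCyclesMod C j), ← Category.assoc, toCyclesMod_cyclesModι, hr,
    Category.comp_id]

lemma IsTotallyAcyclicWrt.projective_cyclesMod_of_mem (hC : IsTotallyAcyclicWrt 𝓣 C) {j : ℤ}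
    (hZ : cyclesMod C j ∈ 𝓣) : Projective (cyclesMod C j) := by
  obtain ⟨r, hr⟩ := hC.exists_retraction hZ
  have := hC.projective (j + 1)
  exact Retract.projective ⟨_, r, hr⟩

lemma IsTotallyAcyclicWrt.projective_cyclesMod_of_succ_mem (hC : IsTotallyAcyclicWrt 𝓣 C)
    {j : ℤ} (hZ : cyclesMod C (j + 1) ∈ 𝓣) : Projective (cyclesMod C j) := by
  obtain ⟨r, hr⟩ := hC.exists_retraction hZ
  obtain ⟨_, hS⟩ := ses_cyclesMod hC.exact j
  let σ := ShortComplex.Splitting.ofExactOfRetraction _ hS.exact r hr hS.epi_g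
  have := hC.projective (j + 1 + 1)
  exact Retract.projective ⟨σ.s, toCyclesMod C j, σ.s_g⟩

theorem IsTotallyAcyclicWrt.projective_cyclesMod_of_resDimLE (hC : IsTotallyAcyclicWrt 𝓣 C)
    (hflat : ∀ F, IsFlatMod F → F ∈ 𝓣) :
    ∀ {m : ℕ} {j : ℤ}, ResDimLE {F : ModuleCat.{0} R | IsFlatMod F} m (cyclesMod C j) →
      Projective (cyclesMod C j)
  | 0, _, h => hC.projective_cyclesMod_of_mem (hflat _ h)
  | _ + 1, j, h => by
    have := hC.projective (j + 1 + 1)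
    have := hC.projective_cyclesMod_of_resDimLE hflat
      (ResDimLE.of_ses_of_projective (ses_cyclesMod hC.exact j) h)
    exact hC.projective_cyclesMod_of_succ_mem (hflat _ (IsFlatMod.of_projective _))

end TotallyAcyclic

section Projective

variable (P : ModuleCat.{0} R)

abbrev periodicComplex : ChainComplex (ModuleCat.{0} R) ℤ where
  X _ := P
  d i j := if i = j + 1 ∧ Odd i then 𝟙 P else 0
  shape i j hij := if_neg fun h => hij h.1.symm
  d_comp_d' i j k hij hjk := by
    have : ¬(Odd i ∧ Odd j) := by
      simp only [ComplexShape.down_Rel, Int.odd_iff] at *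
      omega
    split_ifs with hi hj
    · exact absurd ⟨hi.2, hj.2⟩ this
    all_goals simp

variable {P}

lemma periodicComplex_d_of_odd {i j : ℤ} (hij : i = j + 1) (hi : Odd i) :
    (periodicComplex P).d i j = 𝟙 P :=
  if_pos ⟨hij, hi⟩

lemma periodicComplex_d_of_even {i j : ℤ} (hi : ¬Odd i) : (periodicComplex P).d i j = 0 :=
  if_neg fun h => hi h.2

lemma isTotallyAcyclicWrt_periodicComplex [Projective P] (𝓣 : Set (ModuleCat.{0} R)) :
    IsTotallyAcyclicWrt 𝓣 (periodicComplex P) where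
  projective _ := inferInstanceAs (Projective P)
  exact n := by
    rw [← HomologicalComplex.exactAt_iff,
      HomologicalComplex.exactAt_iff' _ (n + 1) n (n - 1) (by simp) (by simp)]
    by_cases hn : Odd n
    · rw [ShortComplex.exact_iff_mono _ (periodicComplex_d_of_even (by grind))]
      show Mono ((periodicComplex P).d n (n - 1))
      rw [periodicComplex_d_of_odd (by omega) hn]
      infer_instance
    · rw [ShortComplex.exact_iff_epi _ (periodicComplex_d_of_even hn)]
      show Epi ((periodicComplex P).d (n + 1) n)
      rw [periodicComplex_d_of_odd rfl (by grind)]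
      infer_instance
  homExact T _ n g hg := by
    by_cases hn : Odd n
    · exact ⟨g, by rw [periodicComplex_d_of_odd (by omega) hn, Category.id_comp]⟩
    · rw [periodicComplex_d_of_odd rfl (by grind), Category.id_comp] at hg
      exact ⟨0, by rw [hg, comp_zero]⟩

lemma isGProj_of_projective (𝓣 : Set (ModuleCat.{0} R)) [Projective P] : IsGProj 𝓣 P :=
  ⟨periodicComplex P, isTotallyAcyclicWrt_periodicComplex 𝓣, 0,
    ⟨(kernelIsoOfEq (periodicComplex_d_of_even (by decide)) ≪≫ kernelZeroIsoSource).symm⟩⟩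

end Projective

/-- over a ring of finite weak global dimension, Gorenstein (𝓛,𝓐)-projective
modules are exactly the projective modules. -/
theorem stmt9
    (R : Type) [Ring R] (𝓛 : Set (ModuleCat.{0} R)) (𝓐 : Set (ModuleCat.{0} Rᵐᵒᵖ))
    (hdp : CompleteDualityPair 𝓛 𝓐)
    (hwgl : ∀ N : ModuleCat.{0} R,
      ∃ n : ℕ, ResDimLE {F : ModuleCat.{0} R | IsFlatMod F} n N) :
    ∀ M : ModuleCat.{0} R, IsGProj 𝓛 M ↔ Projective M := by
  refine fun M => ⟨fun ⟨C, hC, n, ⟨e⟩⟩ => ?_, fun _ => isGProj_of_projective 𝓛⟩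
  obtain ⟨j, rfl⟩ : ∃ j, n = j + 1 := ⟨n - 1, by omega⟩
  have eZ : M ≅ cyclesMod C j := by
    have e' := e ≪≫ ModuleCat.kernelIsoKer _
    rwa [add_sub_cancel_right] at e'
  obtain ⟨m, hm⟩ := hwgl (cyclesMod C j)
  exact Projective.of_iso eZ.symm
    (hC.projective_cyclesMod_of_resDimLE (fun _ => hdp.mem_of_isFlatMod) hm)

end DualityPaper
end
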